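/- arXiv:1403.4015 — 12 statements merged into one kernel-verified Lean document; each statement's English description precedes it below -/
import Mathlib

section
/- Let p be a prime and let j ≥ 0 be an integer. Then, in F_p[X,Z], the identity (X−Z)·φ_j(X,X,Z) = j·(X^{j−1} − Z^{j−1}) holds (where φ_j(X,X,Z) denotes the specialization of φ_j at Y = X). -/
/-!
Differentiate the defining identity of `φ` with respect to `Y` and then set `Y = X`. On the
left the product rule leaves only `-(X - Z) φ(X, X, Z)`, because the factor `X - Y` vanishes
on the diagonal; on the right one gets `-j X^(j-1) + j Z^(j-1)`.
-/

open MvPolynomial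

variable {R S σ : Type*} [CommRing R] [CommRing S] [Algebra R S]

theorem aeval_pderiv_X_sub_X_mul {x : σ → S} {i k : σ} (hki : k ≠ i) (hx : x k = x i)
    (g : MvPolynomial σ R) :
    aeval x (pderiv i ((X k - X i) * g)) = -aeval x g := by
  simp [pderiv_X_of_ne hki, hx]

theorem aeval_diag_pderiv_one_pow_combination (j : ℕ) :
    aeval ![X 0, X 0, X 1] (pderiv (1 : Fin 3)
      (X 0 ^ j - X 1 ^ j - X 2 ^ j + (-X 0 + X 1 + X 2) ^ j : MvPolynomial (Fin 3) R)) =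
      (j : MvPolynomial (Fin 2) R) * (X 1 ^ (j - 1) - X 0 ^ (j - 1)) := by
  simp [Derivation.leibniz_pow]
  ring

theorem X_sub_X_mul_aeval_diag_eq {j : ℕ} {φ : MvPolynomial (Fin 3) R}
    (hφ : (X 0 - X 1) * (X 0 - X 2) * φ =
      X 0 ^ j - X 1 ^ j - X 2 ^ j + (-X 0 + X 1 + X 2) ^ j) :
    (X 0 - X 1) * aeval ![X 0, X 0, X 1] φ =
      (j : MvPolynomial (Fin 2) R) * (X 0 ^ (j - 1) - X 1 ^ (j - 1)) := by
  have h := congrArg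
    (fun f => aeval (![X 0, X 0, X 1] : Fin 3 → MvPolynomial (Fin 2) R) (pderiv 1 f)) hφ
  simp only [mul_assoc] at h
  rw [aeval_pderiv_X_sub_X_mul (k := 0) (i := 1) (by decide) rfl,
    aeval_diag_pderiv_one_pow_combination, map_mul, map_sub, aeval_X, aeval_X] at h
  simp only [Matrix.cons_val_zero, Matrix.cons_val_two, Matrix.tail_cons,
    Matrix.head_cons] at h
  linear_combination -h

theorem phi_specialization_eq_general
    (p : ℕ) (j : ℕ)
    (φ : MvPolynomial (Fin 3) (ZMod p))
    (hφ : (X 0 - X 1) * (X 0 - X 2) * φ =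
      X 0 ^ j - X 1 ^ j - X 2 ^ j + (-X 0 + X 1 + X 2) ^ j) :
    (X 0 - X 1) * (aeval ![X 0, X 0, X 1] φ) =
      (j : MvPolynomial (Fin 2) (ZMod p)) * (X 0 ^ (j - 1) - X 1 ^ (j - 1)) :=
  X_sub_X_mul_aeval_diag_eq hφ

theorem phi_specialization_eq
    (p : ℕ) (hp : p.Prime) (j : ℕ)
    (φ : MvPolynomial (Fin 3) (ZMod p))
    (hφ : (X 0 - X 1) * (X 0 - X 2) * φ =
      X 0 ^ j - X 1 ^ j - X 2 ^ j + (-X 0 + X 1 + X 2) ^ j) :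
    (X 0 - X 1) * (aeval ![X 0, X 0, X 1] φ) =
      (j : MvPolynomial (Fin 2) (ZMod p)) * (X 0 ^ (j - 1) - X 1 ^ (j - 1)) :=
  phi_specialization_eq_general p j φ hφ
end

section
/- Let p be a prime, let j ≥ 2 be an integer with p not dividing j and p not dividing j − 1, and let k be a positive integer. Then the polynomial φ_j(X,X,Z) ∈ F_p[X,Z] is not divisible by X − Z, and φ_j(X,X,Z) and φ_{p^k+1}(X,X,Z) are coprime in F_p[X,Z]. -/
/-!
Differentiating the defining identity of `φ_n` in `Y` and then setting `Y = X` gives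
`(X - Z) φ_n(X,X,Z) = n (X^(n-1) - Z^(n-1))`. For `n = p^k + 1` the right side is
`(X - Z)^(p^k)` in characteristic `p`, so `φ_{p^k+1}(X,X,Z) = (X - Z)^(p^k-1)`. For `n = j` the
quotient is `j` times a geometric sum, which takes the value `j (j - 1) ≠ 0` at `X = Z = 1`,
so `X - Z ∤ φ_j(X,X,Z)`; as `X - Z` is prime, `φ_j(X,X,Z)` is coprime to all its powers.
-/

open MvPolynomial

def IsPhi {R : Type*} [CommRing R] (n : ℕ) (φ : MvPolynomial (Fin 3) R) : Prop :=
  (X 0 - X 1) * (X 0 - X 2) * φ = X 0 ^ n - X 1 ^ n - X 2 ^ n + (-X 0 + X 1 + X 2) ^ n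

theorem MvPolynomial.prime_X_zero_sub_X_one {R : Type*} [CommRing R] [IsDomain R] :
    Prime (X 0 - X 1 : MvPolynomial (Fin 2) R) := by
  rw [← MulEquiv.prime_iff (finSuccEquiv R 1).toMulEquiv]
  have hsub : (finSuccEquiv R 1).toMulEquiv (X 0 - X 1) = Polynomial.X - Polynomial.C (X 0) := by
    show finSuccEquiv R 1 (X 0 - X 1) = _
    rw [map_sub, finSuccEquiv_X_zero, show (1 : Fin 2) = (0 : Fin 1).succ from rfl,
      finSuccEquiv_X_succ]
  rw [hsub]
  exact Polynomial.prime_X_sub_C _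

namespace IsPhi

variable {R : Type*} [CommRing R] {n : ℕ} {φ : MvPolynomial (Fin 3) R}

theorem sub_mul_diag (h : IsPhi n φ) :
    (X 0 - X 1) * (aeval ![X 0, X 0, X 1] φ : MvPolynomial (Fin 2) R) =
      (n : MvPolynomial (Fin 2) R) * (X 0 ^ (n - 1) - X 1 ^ (n - 1)) := by
  have h' : aeval ![X 0, X 0, X 1] φ * (X 1 - X 0) =
      (n : MvPolynomial (Fin 2) R) * X 1 ^ (n - 1) -
        (n : MvPolynomial (Fin 2) R) * X 0 ^ (n - 1) := by
    simpa [aeval_eq_bind₁, neg_add_eq_sub] using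
      congrArg (fun q ↦ aeval ![(X 0 : MvPolynomial (Fin 2) R), X 0, X 1] (pderiv 1 q)) h
  linear_combination -h'

variable [IsDomain R]

theorem diag_eq_mul_geom_sum (h : IsPhi n φ) :
    (aeval ![X 0, X 0, X 1] φ : MvPolynomial (Fin 2) R) =
      n * ∑ i ∈ Finset.range (n - 1), X 0 ^ i * X 1 ^ (n - 1 - 1 - i) := by
  apply mul_left_cancel₀ (prime_X_zero_sub_X_one (R := R)).ne_zero
  rw [sub_mul_diag h, ← geom_sum₂_mul]
  ring

theorem eval_one_diag (h : IsPhi n φ) :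
    eval 1 (aeval ![X 0, X 0, X 1] φ : MvPolynomial (Fin 2) R) = n * (n - 1 : ℕ) := by
  rw [diag_eq_mul_geom_sum h]
  simp

theorem not_sub_dvd_diag (h : IsPhi n φ) (hn : (n : R) ≠ 0) (hn1 : ((n - 1 : ℕ) : R) ≠ 0) :
    ¬ (X 0 - X 1) ∣ (aeval ![X 0, X 0, X 1] φ : MvPolynomial (Fin 2) R) := by
  rintro ⟨q, hq⟩
  have h0 : eval 1 (aeval ![X 0, X 0, X 1] φ : MvPolynomial (Fin 2) R) = 0 := by
    rw [hq]
    simp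
  rw [eval_one_diag h] at h0
  exact mul_ne_zero hn hn1 h0

theorem diag_eq_sub_pow (p : ℕ) [Fact p.Prime] [CharP R p] {k : ℕ} (hk : 0 < k)
    (h : IsPhi (p ^ k + 1) φ) :
    (aeval ![X 0, X 0, X 1] φ : MvPolynomial (Fin 2) R) = (X 0 - X 1) ^ (p ^ k - 1) := by
  apply mul_left_cancel₀ (prime_X_zero_sub_X_one (R := R)).ne_zero
  have hpk : ((p ^ k + 1 : ℕ) : MvPolynomial (Fin 2) R) = 1 := by
    simp [CharP.cast_eq_zero, hk.ne']
  rw [sub_mul_diag h, hpk, one_mul, Nat.add_sub_cancel, ← sub_pow_char_pow, ← pow_succ',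
    Nat.sub_add_cancel (Nat.one_le_pow _ _ (Fact.out : p.Prime).pos)]

end IsPhi

theorem phi_specializations_coprime_general
    (p : ℕ) (hp : p.Prime) (j k : ℕ)
    (hpj : ¬ p ∣ j) (hpj1 : ¬ p ∣ (j - 1)) (hk : 0 < k)
    (φj φpk : MvPolynomial (Fin 3) (ZMod p))
    (hφj : (X 0 - X 1) * (X 0 - X 2) * φj =
      X 0 ^ j - X 1 ^ j - X 2 ^ j + (-X 0 + X 1 + X 2) ^ j)
    (hφpk : (X 0 - X 1) * (X 0 - X 2) * φpk =
      X 0 ^ (p ^ k + 1) - X 1 ^ (p ^ k + 1) - X 2 ^ (p ^ k + 1) +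
        (-X 0 + X 1 + X 2) ^ (p ^ k + 1)) :
    ¬ (X 0 - X 1) ∣ (aeval ![X 0, X 0, X 1] φj : MvPolynomial (Fin 2) (ZMod p)) ∧
      ∀ g : MvPolynomial (Fin 2) (ZMod p),
        g ∣ aeval ![X 0, X 0, X 1] φj → g ∣ aeval ![X 0, X 0, X 1] φpk → IsUnit g := by
  have := Fact.mk hp
  have hnd : ¬ (X 0 - X 1) ∣ (aeval ![X 0, X 0, X 1] φj : MvPolynomial (Fin 2) (ZMod p)) :=
    IsPhi.not_sub_dvd_diag hφj ((ZMod.natCast_eq_zero_iff _ _).not.mpr hpj)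
      ((ZMod.natCast_eq_zero_iff _ _).not.mpr hpj1)
  have hrel : IsRelPrime (aeval ![X 0, X 0, X 1] φj)
      (X 0 - X 1 : MvPolynomial (Fin 2) (ZMod p)) :=
    (prime_X_zero_sub_X_one.irreducible.isRelPrime_iff_not_dvd.mpr hnd).symm
  refine ⟨hnd, ?_⟩
  rw [IsPhi.diag_eq_sub_pow p hk hφpk]
  exact hrel.pow_right

theorem phi_specializations_coprime
    (p : ℕ) (hp : p.Prime) (j k : ℕ) (hj : 2 ≤ j)
    (hpj : ¬ p ∣ j) (hpj1 : ¬ p ∣ (j - 1)) (hk : 0 < k)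
    (φj φpk : MvPolynomial (Fin 3) (ZMod p))
    (hφj : (X 0 - X 1) * (X 0 - X 2) * φj =
      X 0 ^ j - X 1 ^ j - X 2 ^ j + (-X 0 + X 1 + X 2) ^ j)
    (hφpk : (X 0 - X 1) * (X 0 - X 2) * φpk =
      X 0 ^ (p ^ k + 1) - X 1 ^ (p ^ k + 1) - X 2 ^ (p ^ k + 1) +
        (-X 0 + X 1 + X 2) ^ (p ^ k + 1)) :
    ¬ (X 0 - X 1) ∣ (aeval ![X 0, X 0, X 1] φj : MvPolynomial (Fin 2) (ZMod p)) ∧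
      ∀ g : MvPolynomial (Fin 2) (ZMod p),
        g ∣ aeval ![X 0, X 0, X 1] φj → g ∣ aeval ![X 0, X 0, X 1] φpk → IsUnit g :=
  phi_specializations_coprime_general p hp j k hpj hpj1 hk φj φpk hφj hφpk
end

section
/- Let p be a prime and k a positive integer. Then, in F_p[X,Z], the specialization of φ_{p^k+1} at Y = X satisfies φ_{p^k+1}(X,X,Z) = (p^k+1)·(X−Z)^{p^k−1}. -/
/-!
Write `q = p ^ k`. Since `(u - v) ^ q = u ^ q - v ^ q` in characteristic `p`, expanding
`X ^ (q + 1) - Y ^ (q + 1) - Z ^ (q + 1) + (Y + Z - X) ^ (q + 1)` in `a = X - Y`, `b = X - Z`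
leaves only `a * b ^ q + a ^ q * b`, so `φ_{q+1} = (X - Z) ^ (q - 1) + (X - Y) ^ (q - 1)`.
At `Y = X` the second summand vanishes, and `q + 1 = 1` in `𝔽_p`.
-/

open MvPolynomial

theorem pow_succ_sub_pow_succ_sub_pow_succ_add_pow_succ_of_expChar {R : Type*} [CommRing R]
    (p n : ℕ) [ExpChar R p] (x y z : R) :
    x ^ (p ^ n + 1) - y ^ (p ^ n + 1) - z ^ (p ^ n + 1) + (-x + y + z) ^ (p ^ n + 1) =
      (x - y) * (x - z) * ((x - z) ^ (p ^ n - 1) + (x - y) ^ (p ^ n - 1)) := by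
  obtain ⟨m, hm⟩ : ∃ m, p ^ n = m + 1 :=
    Nat.exists_eq_add_one.mpr (pow_pos (expChar_pos R p) n)
  have frob_sub (u v : R) : (u - v) ^ (m + 1) = u ^ (m + 1) - v ^ (m + 1) := by
    rw [← hm, sub_pow_expChar_pow]
  have frob_neg_add_add : (-x + y + z) ^ (m + 1) = -x ^ (m + 1) + y ^ (m + 1) + z ^ (m + 1) := by
    rw [← hm, show -x + y + z = y + z - x by ring, sub_pow_expChar_pow, add_pow_expChar_pow]
    ring
  rw [hm, Nat.add_sub_cancel]
  simp only [pow_succ _ (m + 1), frob_neg_add_add]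
  linear_combination -(x - y) * frob_sub x z - (x - z) * frob_sub x y

theorem phi_pow_add_one_specialization
    (p k : ℕ) (hp : p.Prime) (hk : 0 < k)
    (φ : MvPolynomial (Fin 3) (ZMod p))
    (hφ : (X 0 - X 1) * (X 0 - X 2) * φ =
      X 0 ^ (p ^ k + 1) - X 1 ^ (p ^ k + 1) - X 2 ^ (p ^ k + 1) +
        (-X 0 + X 1 + X 2) ^ (p ^ k + 1)) :
    (aeval ![X 0, X 0, X 1] φ : MvPolynomial (Fin 2) (ZMod p)) =
      ((p ^ k + 1 : ℕ) : MvPolynomial (Fin 2) (ZMod p)) * (X 0 - X 1) ^ (p ^ k - 1) := by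
  have : Fact p.Prime := ⟨hp⟩
  have hX_sub_X {i j : Fin 3} (hij : i ≠ j) : (X i - X j : MvPolynomial (Fin 3) (ZMod p)) ≠ 0 :=
    sub_ne_zero.mpr (X_injective.ne hij)
  have hφ_eq : φ = (X 0 - X 2) ^ (p ^ k - 1) + (X 0 - X 1) ^ (p ^ k - 1) :=
    mul_left_cancel₀ (mul_ne_zero (hX_sub_X (by decide)) (hX_sub_X (by decide)))
      (hφ.trans (pow_succ_sub_pow_succ_sub_pow_succ_add_pow_succ_of_expChar p k _ _ _))
  have hq : p ^ k - 1 ≠ 0 :=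
    Nat.sub_ne_zero_of_lt (Nat.one_lt_pow hk.ne' hp.one_lt)
  have hcast : ((p ^ k + 1 : ℕ) : MvPolynomial (Fin 2) (ZMod p)) = 1 := by
    rw [Nat.cast_add_one, Nat.cast_pow, CharP.cast_eq_zero, zero_pow hk.ne', zero_add]
  simp [hφ_eq, hcast, zero_pow hq]
end

section
/- Let p be a prime and k a positive integer. Then the polynomial φ_{p^k+1} ∈ F_p[X,Y,Z] is square-free, i.e., it is not divisible by the square of any nonconstant polynomial. -/
/-!
Write `q = p ^ k`. Since `(a - b) ^ q = a ^ q - b ^ q` in characteristic `p`, the defining identity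
is solved by `φ = (X - Y) ^ (q - 1) + (X - Z) ^ (q - 1)`. The involutive change of variables
`Y ↦ X - Y`, `Z ↦ X - Z` turns this into `Y ^ (q - 1) + Z ^ (q - 1)`. A square factor of the
latter would divide both partial derivatives `(q - 1) Y ^ (q - 2)` and `(q - 1) Z ^ (q - 2)`,
which are coprime because `q - 1 ≡ -1` is a unit mod `p`.
-/

open MvPolynomial

theorem Squarefree.map_mulEquiv {M N : Type*} [Monoid M] [Monoid N] {a : M}
    (ha : Squarefree a) (e : M ≃* N) : Squarefree (e a) := by
  intro x hx
  have hpre : e.symm x * e.symm x ∣ a := by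
    simpa using map_dvd e.symm hx
  simpa using (ha _ hpre).map e

theorem Derivation.dvd_of_mul_self_dvd {R A : Type*} [CommSemiring R] [CommSemiring A]
    [Algebra R A] (D : Derivation R A A) {a d : A} (h : d * d ∣ a) : d ∣ D a := by
  obtain ⟨c, rfl⟩ := h
  simp only [D.leibniz, smul_eq_mul]
  exact Dvd.intro (d * D c + 2 * c * D d) (by ring)

theorem Derivation.squarefree_of_isRelPrime {R A : Type*} [CommSemiring R] [CommSemiring A]
    [Algebra R A] (D₁ D₂ : Derivation R A A) {a : A} (h : IsRelPrime (D₁ a) (D₂ a)) :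
    Squarefree a := fun _ hd =>
  h (D₁.dvd_of_mul_self_dvd hd) (D₂.dvd_of_mul_self_dvd hd)

theorem Prime.isRelPrime_pow_pow {M : Type*} [CommMonoidWithZero M] [IsCancelMulZero M] {p q : M}
    (hp : Prime p) (hpq : ¬p ∣ q) (m n : ℕ) : IsRelPrime (p ^ m) (q ^ n) := by
  intro d hdp hdq
  obtain ⟨i, -, hdi⟩ := (dvd_prime_pow hp m).1 hdp
  rcases i with _ | i
  · exact hdi.isUnit_iff.2 (by simp)
  · exact absurd (hp.dvd_of_dvd_pow
      ((dvd_pow_self p i.succ_ne_zero).trans (hdi.symm.dvd.trans hdq))) hpq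

namespace MvPolynomial

variable {R σ : Type*}

theorem isRelPrime_X_pow_X_pow [CommRing R] [IsDomain R] {i j : σ} (hij : i ≠ j) (m n : ℕ) :
    IsRelPrime (X i ^ m : MvPolynomial σ R) (X j ^ n) :=
  Prime.isRelPrime_pow_pow X_prime (by simpa using hij) m n

theorem squarefree_X_pow_add_X_pow [CommRing R] [IsDomain R] {n : ℕ} (hn : IsUnit (n : R))
    {i j : σ} (hij : i ≠ j) : Squarefree (X i ^ n + X j ^ n : MvPolynomial σ R) := by
  have hC : IsUnit (n : MvPolynomial σ R) := by simpa using hn.map (C : R →+* MvPolynomial σ R)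
  refine (pderiv i).squarefree_of_isRelPrime (pderiv j) ?_
  simp only [map_add, pderiv_pow, pderiv_X_self, pderiv_X_of_ne hij, pderiv_X_of_ne hij.symm,
    mul_zero, mul_one, add_zero, zero_add]
  exact (isRelPrime_mul_unit_left hC).2 (isRelPrime_X_pow_X_pow hij _ _)

variable [CommRing R] [DecidableEq σ]

noncomputable def subFromX (i : σ) : MvPolynomial σ R →ₐ[R] MvPolynomial σ R :=
  aeval fun j => if j = i then X i else X i - X j

theorem subFromX_X_of_ne {i j : σ} (hij : j ≠ i) :
    subFromX i (X j : MvPolynomial σ R) = X i - X j := by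
  simp [subFromX, hij]

theorem subFromX_comp_self (i : σ) :
    (subFromX i).comp (subFromX i) = AlgHom.id R (MvPolynomial σ R) := by
  refine algHom_ext fun j => ?_
  by_cases hj : j = i <;> simp [subFromX, hj]

noncomputable def subFromXEquiv (i : σ) : MvPolynomial σ R ≃ₐ[R] MvPolynomial σ R :=
  AlgEquiv.ofAlgHom _ _ (subFromX_comp_self i) (subFromX_comp_self i)

end MvPolynomial

theorem sub_mul_sub_mul_pow_add_pow {R : Type*} [CommRing R] (p : ℕ) [ExpChar R p] (k : ℕ)
    (x y z : R) :
    (x - y) * (x - z) * ((x - y) ^ (p ^ k - 1) + (x - z) ^ (p ^ k - 1)) =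
      x ^ (p ^ k + 1) - y ^ (p ^ k + 1) - z ^ (p ^ k + 1) + (-x + y + z) ^ (p ^ k + 1) := by
  obtain ⟨n, hn⟩ : ∃ n, p ^ k = n + 1 := Nat.exists_eq_add_one.2 (expChar_pow_pos R p k)
  have hsum : (-x + y + z) ^ p ^ k = -x ^ p ^ k + y ^ p ^ k + z ^ p ^ k := by
    rw [show -x + y + z = (y + z) - x by ring, sub_pow_expChar_pow, add_pow_expChar_pow]
    ring
  have hxy := sub_pow_expChar_pow x y (p := p) (n := k)
  have hxz := sub_pow_expChar_pow x z (p := p) (n := k)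
  rw [hn] at hsum hxy hxz ⊢
  rw [Nat.add_sub_cancel]
  linear_combination (x - z) * hxy + (x - y) * hxz - (-x + y + z) * hsum

theorem natCast_pow_sub_one_eq_neg_one {R : Type*} [Ring R] {p : ℕ} [CharP R p] (hp : p ≠ 0)
    {k : ℕ} (hk : k ≠ 0) : ((p ^ k - 1 : ℕ) : R) = -1 := by
  rw [Nat.cast_sub (Nat.one_le_iff_ne_zero.2 (pow_ne_zero _ hp)), Nat.cast_pow,
    CharP.cast_eq_zero, zero_pow hk, Nat.cast_one, zero_sub]

theorem phi_pow_add_one_squarefree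
    (p k : ℕ) (hp : p.Prime) (hk : 0 < k)
    (φ : MvPolynomial (Fin 3) (ZMod p))
    (hφ : (X 0 - X 1) * (X 0 - X 2) * φ =
      X 0 ^ (p ^ k + 1) - X 1 ^ (p ^ k + 1) - X 2 ^ (p ^ k + 1) +
        (-X 0 + X 1 + X 2) ^ (p ^ k + 1)) :
    Squarefree φ := by
  have : Fact p.Prime := ⟨hp⟩
  have hX : ∀ {i j : Fin 3}, i ≠ j → (X i - X j : MvPolynomial (Fin 3) (ZMod p)) ≠ 0 :=
    fun hij => sub_ne_zero.2 ((X_injective (σ := Fin 3) (R := ZMod p)).ne hij)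
  have hφ_eq : φ = (X 0 - X 1) ^ (p ^ k - 1) + (X 0 - X 2) ^ (p ^ k - 1) :=
    mul_left_cancel₀ (mul_ne_zero (hX (by decide)) (hX (by decide)))
      (hφ.trans (sub_mul_sub_mul_pow_add_pow p k _ _ _).symm)
  have hunit : IsUnit ((p ^ k - 1 : ℕ) : ZMod p) := by
    rw [natCast_pow_sub_one_eq_neg_one hp.ne_zero hk.ne']
    exact isUnit_one.neg
  have hsq := (squarefree_X_pow_add_X_pow hunit (show (1 : Fin 3) ≠ 2 by decide)).map_mulEquiv
    (subFromXEquiv 0).toMulEquiv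
  simpa [hφ_eq, subFromXEquiv, subFromX_X_of_ne] using hsq
end

section
/- Let p be a prime and k a positive integer. Then the polynomial ψ(X,Y,Z) = X^{p^k+1} − Y^{p^k+1} − Z^{p^k+1} + (−X+Y+Z)^{p^k+1} ∈ F_p[X,Y,Z] is square-free, i.e., it is not divisible by the square of any nonconstant polynomial. -/
/-!
If `r * r ∣ ψ` for an irreducible `r`, then `r` divides every partial derivative of `ψ`. With
`q = p ^ k`, the combination `∂₀ψ + ∂ⱼψ` is `(q + 1) (X₀ ^ q - Xⱼ ^ q)`, which in characteristic
`p` is `(X₀ - Xⱼ) ^ q`. Hence `r` is associated to both of the primes `X₀ - X₁` and `X₀ - X₂`,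
which are not associated to each other.
-/

theorem Derivation.dvd_apply_of_mul_self_dvd {R A : Type*} [CommSemiring R] [CommSemiring A]
    [Algebra R A] (D : Derivation R A A) {r f : A} (h : r * r ∣ f) : r ∣ D f := by
  obtain ⟨g, rfl⟩ := h
  rw [mul_assoc, D.leibniz, D.leibniz, smul_eq_mul, smul_eq_mul, smul_eq_mul]
  exact dvd_add (dvd_mul_right _ _) (dvd_mul_of_dvd_left (dvd_mul_right _ _) _)

namespace MvPolynomial

variable {σ R : Type*} [CommRing R]

theorem prime_X_sub_X [IsDomain R] {i j : σ} (hij : i ≠ j) :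
    Prime (X i - X j : MvPolynomial σ R) := by
  classical
  let e := (renameEquiv R (Equiv.optionSubtypeNe i).symm).trans (optionEquivLeft R {k // k ≠ i})
  have he : e (X i - X j) = Polynomial.X - Polynomial.C (X ⟨j, hij.symm⟩) := by
    simp [e, Equiv.optionSubtypeNe_symm_apply, hij.symm]
  rw [← MulEquiv.prime_iff e.toMulEquiv]
  simpa [he] using Polynomial.prime_X_sub_C _

theorem not_X_sub_X_dvd_X_sub_X [Nontrivial R] {i j k : σ} (hij : i ≠ j) (hik : i ≠ k)
    (hjk : j ≠ k) : ¬(X i - X j ∣ (X i - X k : MvPolynomial σ R)) := by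
  classical
  intro h
  have := map_dvd (aeval (Function.update (X : σ → MvPolynomial σ R) i (X j))) h
  simp [Function.update_of_ne hij.symm, Function.update_of_ne hik.symm, sub_eq_zero,
    X_injective.ne hjk] at this

end MvPolynomial

open MvPolynomial

noncomputable def psi (R : Type*) [CommRing R] (q : ℕ) : MvPolynomial (Fin 3) R :=
  X 0 ^ (q + 1) - X 1 ^ (q + 1) - X 2 ^ (q + 1) + (-X 0 + X 1 + X 2) ^ (q + 1)

theorem pderiv_zero_add_pderiv_psi {R : Type*} [CommRing R] (q : ℕ) {j : Fin 3} (hj : j ≠ 0) :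
    pderiv 0 (psi R q) + pderiv j (psi R q) =
      (q + 1) * (X 0 ^ q - X j ^ q : MvPolynomial (Fin 3) R) := by
  fin_cases j
  · exact (hj rfl).elim
  all_goals
    simp only [psi, map_add, map_sub, map_neg, Derivation.leibniz_pow, pderiv_X, Pi.single_apply,
      add_tsub_cancel_right, nsmul_eq_mul, smul_eq_mul, Fin.reduceEq, Fin.reduceFinMk, if_true,
      if_false]
    push_cast
    ring

theorem pderiv_zero_add_pderiv_psi_of_charP {R : Type*} [CommRing R] (p : ℕ) [Fact p.Prime]
    [CharP R p] {k : ℕ} (hk : 0 < k) {j : Fin 3} (hj : j ≠ 0) :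
    pderiv 0 (psi R (p ^ k)) + pderiv j (psi R (p ^ k)) = (X 0 - X j) ^ p ^ k := by
  rw [pderiv_zero_add_pderiv_psi _ hj, sub_pow_char_pow]
  have : ((p ^ k : ℕ) : MvPolynomial (Fin 3) R) = 0 := by
    rw [Nat.cast_pow, CharP.cast_eq_zero, zero_pow hk.ne']
  rw [this, zero_add, one_mul]

theorem psi_squarefree (p k : ℕ) (hp : p.Prime) (hk : 0 < k) :
    Squarefree (X 0 ^ (p ^ k + 1) - X 1 ^ (p ^ k + 1) - X 2 ^ (p ^ k + 1) +
      (-X 0 + X 1 + X 2) ^ (p ^ k + 1) : MvPolynomial (Fin 3) (ZMod p)) := by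
  have : Fact p.Prime := ⟨hp⟩
  change Squarefree (psi (ZMod p) (p ^ k))
  rw [squarefree_iff_irreducible_sq_not_dvd_of_exists_irreducible ⟨X 0, X_prime.irreducible⟩]
  intro r hr hrr
  have hassoc (j : Fin 3) (hj : j ≠ 0) : Associated r (X 0 - X j) := by
    have hdvd_pow : r ∣ (X 0 - X j) ^ p ^ k := by
      rw [← pderiv_zero_add_pderiv_psi_of_charP p hk hj]
      exact dvd_add ((pderiv 0).dvd_apply_of_mul_self_dvd hrr)
        ((pderiv j).dvd_apply_of_mul_self_dvd hrr)
    exact hr.associated_of_dvd (prime_X_sub_X hj.symm).irreducible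
      (UniqueFactorizationMonoid.irreducible_iff_prime.mp hr |>.dvd_of_dvd_pow hdvd_pow)
  exact not_X_sub_X_dvd_X_sub_X (by decide) (by decide) (by decide)
    ((hassoc 1 (by decide)).symm.trans (hassoc 2 (by decide))).dvd
end

section
/- Let q be an odd prime power and let f ∈ F_q[X] be a polynomial whose formal derivative f′ is not a constant polynomial. Then G is divisible neither by X − Y nor by X − Z in F_q[X,Y,Z]. -/
/-!
If `X - Y` divided `G`, then `(X - Y)²` would divide `F = f(X) - f(Y) - f(Z) + f(Y + Z - X)`, so
`∂F/∂X = f'(X) - f'(Y + Z - X)` would vanish on `X = Y`. There it equals `f'(Y) - f'(Z)`, which is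
nonzero because `f'` is not constant. `F` is symmetric in `Y` and `Z`, which gives the case `X - Z`.
-/

open Polynomial

section

open MvPolynomial (X pderiv pderiv_X_of_ne)

variable {R σ : Type*} [CommRing R]

theorem eq_C_of_aeval_X_eq_aeval_X {i j : σ} (hij : i ≠ j) {g : R[X]}
    (h : aeval (X i : MvPolynomial σ R) g = aeval (X j) g) : g = C (g.coeff 0) := by
  classical
  have := congrArg (MvPolynomial.aeval (Pi.single i Polynomial.X : σ → R[X])) h
  rw [← aeval_algHom_apply, ← aeval_algHom_apply] at this
  simpa [Pi.single_apply, hij.symm, Polynomial.aeval_def, eval₂_at_zero] using this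

theorem aeval_update_pderiv_eq_zero_of_sq_dvd [DecidableEq σ] {i j : σ} {p : MvPolynomial σ R}
    (h : (X i - X j : MvPolynomial σ R) ^ 2 ∣ p) :
    MvPolynomial.aeval (Function.update X i (X j) : σ → MvPolynomial σ R) (pderiv i p) = 0 := by
  obtain ⟨q, rfl⟩ := h
  have hvanish : MvPolynomial.aeval (Function.update X i (X j) : σ → MvPolynomial σ R)
      (X i - X j : MvPolynomial σ R) = 0 := by
    rw [map_sub, MvPolynomial.aeval_X, MvPolynomial.aeval_X, Function.update_self]
    rcases eq_or_ne j i with rfl | hji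
    · rw [Function.update_eq_self, sub_self]
    · rw [Function.update_of_ne hji, sub_self]
  simp only [Derivation.leibniz, Derivation.leibniz_pow, smul_eq_mul, nsmul_eq_mul, map_add,
    map_mul, map_pow, hvanish]
  simp

noncomputable def parallelogramSum (f : R[X]) (i j k : σ) : MvPolynomial σ R :=
  aeval (X i) f - aeval (X j) f - aeval (X k) f + aeval (-X i + X j + X k) f

theorem parallelogramSum_comm (f : R[X]) (i j k : σ) :
    parallelogramSum f i j k = parallelogramSum f i k j := by
  rw [parallelogramSum, parallelogramSum, add_right_comm (-X i)]
  ring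

theorem pderiv_parallelogramSum [DecidableEq σ] (f : R[X]) {i j k : σ} (hji : j ≠ i) (hki : k ≠ i) :
    pderiv i (parallelogramSum f i j k) =
      aeval (X i) (derivative f) - aeval (-X i + X j + X k) (derivative f) := by
  simp only [parallelogramSum, map_add, map_sub, map_neg, Derivation.map_aeval,
    MvPolynomial.pderiv_X, Pi.single_eq_same, pderiv_X_of_ne hji, pderiv_X_of_ne hki, smul_eq_mul]
  ring

theorem derivative_eq_C_of_sq_dvd_parallelogramSum {f : R[X]} {i j k : σ}
    (hij : i ≠ j) (hik : i ≠ k) (hjk : j ≠ k) (h : (X i - X j) ^ 2 ∣ parallelogramSum f i j k) :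
    derivative f = C ((derivative f).coeff 0) := by
  classical
  have := aeval_update_pderiv_eq_zero_of_sq_dvd h
  rw [pderiv_parallelogramSum f hij.symm hik.symm, map_sub, ← aeval_algHom_apply,
    ← aeval_algHom_apply] at this
  simp only [map_add, map_neg, MvPolynomial.aeval_X, Function.update_self,
    Function.update_of_ne hij.symm, Function.update_of_ne hik.symm, neg_add_cancel, zero_add] at this
  exact eq_C_of_aeval_X_eq_aeval_X hjk (sub_eq_zero.mp this)

end

theorem G_not_div_by_X_sub_Y_or_X_sub_Z_general
    (K : Type) [Field K]
    (f : K[X]) (hf : ¬ ∃ c : K, Polynomial.derivative f = C c)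
    (G : MvPolynomial (Fin 3) K)
    (hG : (MvPolynomial.X 0 - MvPolynomial.X 1) * (MvPolynomial.X 0 - MvPolynomial.X 2) * G =
      Polynomial.aeval (MvPolynomial.X 0) f - Polynomial.aeval (MvPolynomial.X 1) f -
        Polynomial.aeval (MvPolynomial.X 2) f +
        Polynomial.aeval (-MvPolynomial.X 0 + MvPolynomial.X 1 + MvPolynomial.X 2) f) :
    ¬ (MvPolynomial.X 0 - MvPolynomial.X 1) ∣ G ∧
      ¬ (MvPolynomial.X 0 - MvPolynomial.X 2) ∣ G := by
  rw [← parallelogramSum] at hG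
  constructor
  · rintro ⟨H, rfl⟩
    refine hf ⟨_, derivative_eq_C_of_sq_dvd_parallelogramSum (i := 0) (j := 1) (k := 2)
      (by decide) (by decide) (by decide) ⟨(MvPolynomial.X 0 - MvPolynomial.X 2) * H, ?_⟩⟩
    rw [← hG]
    ring
  · rintro ⟨H, rfl⟩
    refine hf ⟨_, derivative_eq_C_of_sq_dvd_parallelogramSum (i := 0) (j := 2) (k := 1)
      (by decide) (by decide) (by decide) ⟨(MvPolynomial.X 0 - MvPolynomial.X 1) * H, ?_⟩⟩
    rw [parallelogramSum_comm, ← hG]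
    ring

theorem G_not_div_by_X_sub_Y_or_X_sub_Z
    (K : Type) [Field K] [Fintype K] (hodd : Odd (Fintype.card K))
    (f : K[X]) (hf : ¬ ∃ c : K, Polynomial.derivative f = C c)
    (G : MvPolynomial (Fin 3) K)
    (hG : (MvPolynomial.X 0 - MvPolynomial.X 1) * (MvPolynomial.X 0 - MvPolynomial.X 2) * G =
      Polynomial.aeval (MvPolynomial.X 0) f - Polynomial.aeval (MvPolynomial.X 1) f -
        Polynomial.aeval (MvPolynomial.X 2) f +
        Polynomial.aeval (-MvPolynomial.X 0 + MvPolynomial.X 1 + MvPolynomial.X 2) f) :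
    ¬ (MvPolynomial.X 0 - MvPolynomial.X 1) ∣ G ∧
      ¬ (MvPolynomial.X 0 - MvPolynomial.X 2) ∣ G :=
  G_not_div_by_X_sub_Y_or_X_sub_Z_general K f hf G hG
end

section
/- Let q be a power of 2 and let f ∈ F_q[X] be any polynomial. Then H is divisible neither by X + Y nor by X + Z in F_q[X,Y,Z]. -/
/-!
If `X + Y` divided `H`, then `(X + Y)²` would divide the right-hand side, so `X + Y` would divide
its `Y`-derivative `f'(Y) + f'(X + Y + Z) + X + Z`. Setting `Y = X` and `Z = 0` kills `X + Y` in
characteristic 2 and leaves `f'(X) + f'(0) + X = 0`, which is impossible because the coefficient of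
`X` in `f'` is `2 f₂ = 0`. The right-hand side is symmetric in `Y` and `Z`, which gives `X + Z`.
-/

open Polynomial

theorem Derivation.dvd_apply_of_sq_dvd {R A : Type*} [CommSemiring R] [CommSemiring A]
    [Algebra R A] (D : Derivation R A A) {a p : A} (h : a ^ 2 ∣ p) : a ∣ D p := by
  obtain ⟨q, rfl⟩ := h
  rw [D.leibniz, D.leibniz_pow, smul_eq_mul, smul_eq_mul, smul_eq_mul, nsmul_eq_mul]
  exact Dvd.intro (a * D q + q * (2 * D a)) (by ring)

theorem Polynomial.coeff_derivative_one_of_charTwo {R : Type*} [CommRing R] [CharP R 2]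
    (f : R[X]) : (derivative f).coeff 1 = 0 := by
  simp [coeff_derivative, one_add_one_eq_two, CharTwo.two_eq_zero]

theorem FiniteField.charP_two_of_card_eq_two_pow {K : Type*} [Field K] [Fintype K] {m : ℕ}
    (hm : 0 < m) (hK : Fintype.card K = 2 ^ m) : CharP K 2 :=
  ringChar.of_eq <| FiniteField.even_card_iff_char_two.mpr <| by
    rw [hK, Nat.pow_mod, Nat.mod_self, zero_pow hm.ne', Nat.zero_mod]

namespace MvPolynomial

variable {K σ : Type*} [CommRing K] [Nontrivial K] [CharP K 2] [DecidableEq σ] {i j k : σ}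

theorem X_add_X_sq_not_dvd (hij : i ≠ j) (hjk : j ≠ k) (hik : i ≠ k) (f : K[X]) :
    ¬ (X i + X j : MvPolynomial σ K) ^ 2 ∣ Polynomial.aeval (X i) f + Polynomial.aeval (X j) f +
      Polynomial.aeval (X k) f + Polynomial.aeval (X i + X j + X k) f +
      (X i + X j) * (X i + X k) := by
  intro hdvd
  have hderiv := (pderiv j).dvd_apply_of_sq_dvd hdvd
  simp only [map_add, Derivation.leibniz, Derivation.comp_aeval_eq, pderiv_X_self,
    pderiv_X_of_ne hij, pderiv_X_of_ne hjk.symm, smul_eq_mul] at hderiv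
  have hline : derivative f + Polynomial.C ((derivative f).coeff 0) + Polynomial.X = 0 := by
    simpa [hjk, hik, ← Polynomial.aeval_algHom_apply, CharTwo.add_self_eq_zero,
      ← coeff_zero_eq_aeval_zero'] using
      _root_.map_dvd (aeval fun l => if l = k then (0 : K[X]) else Polynomial.X) hderiv
  simpa [coeff_derivative_one_of_charTwo] using congrArg (Polynomial.coeff · 1) hline

theorem not_X_add_X_dvd_of_mul_eq (hij : i ≠ j) (hjk : j ≠ k) (hik : i ≠ k) (f : K[X])
    {H : MvPolynomial σ K}
    (hH : (X i + X j) * (X i + X k) * H = Polynomial.aeval (X i) f + Polynomial.aeval (X j) f +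
      Polynomial.aeval (X k) f + Polynomial.aeval (X i + X j + X k) f +
      (X i + X j) * (X i + X k)) :
    ¬ X i + X j ∣ H := by
  rintro ⟨G, rfl⟩
  exact X_add_X_sq_not_dvd hij hjk hik f ⟨(X i + X k) * G, by rw [← hH]; ring⟩

end MvPolynomial

theorem H_not_div_by_X_add_Y_or_X_add_Z
    (m : ℕ) (hm : 0 < m)
    (K : Type) [Field K] [Fintype K] (hK : Fintype.card K = 2 ^ m)
    (f : K[X]) (H : MvPolynomial (Fin 3) K)
    (hH : (MvPolynomial.X 0 + MvPolynomial.X 1) * (MvPolynomial.X 0 + MvPolynomial.X 2) * H =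
      Polynomial.aeval (MvPolynomial.X 0) f + Polynomial.aeval (MvPolynomial.X 1) f +
        Polynomial.aeval (MvPolynomial.X 2) f +
        Polynomial.aeval (MvPolynomial.X 0 + MvPolynomial.X 1 + MvPolynomial.X 2) f +
        (MvPolynomial.X 0 + MvPolynomial.X 1) * (MvPolynomial.X 0 + MvPolynomial.X 2)) :
    ¬ (MvPolynomial.X 0 + MvPolynomial.X 1) ∣ H ∧
      ¬ (MvPolynomial.X 0 + MvPolynomial.X 2) ∣ H := by
  have := FiniteField.charP_two_of_card_eq_two_pow hm hK
  refine ⟨MvPolynomial.not_X_add_X_dvd_of_mul_eq (by decide) (by decide) (by decide) f hH,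
    MvPolynomial.not_X_add_X_dvd_of_mul_eq (k := 1) (by decide) (by decide) (by decide) f ?_⟩
  rw [add_right_comm (MvPolynomial.X 0 : MvPolynomial (Fin 3) K) (MvPolynomial.X 2)]
  linear_combination hH
end

section
/- Let q be an odd prime power, let f ∈ F_q[X], and let r be a positive integer. Then the function on F_{q^r} induced by f is planar if and only if every triple (x, y, z) ∈ F_{q^r}^3 with G(x, y, z) = 0 satisfies x = y or x = z (here G is evaluated in F_{q^r} via the inclusion of F_q into F_{q^r}). -/
/-! On a finite field injectivity suffices, so planarity of `g` says that there are no
coincidences `g (a + ε) - g a = g (b + ε) - g b` with `ε ≠ 0` and `a ≠ b`. With `x = a + ε`,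
`y = a`, `z = b + ε` these are exactly the zeros of the second difference
`g x - g y - g z + g (-x + y + z)` off the lines `x = y` and `x = z`, and dividing that second
difference by `(x - y) * (x - z)` gives `G`. -/

open Polynomial

/-- A function on a field of odd characteristic is planar if for every nonzero `ε`
the map `x ↦ f (x + ε) - f x` is a bijection. -/
def IsPlanarOdd {F : Type} [Field F] (f : F → F) : Prop :=
  ∀ ε : F, ε ≠ 0 → Function.Bijective (fun x : F => f (x + ε) - f x)

theorem isPlanarOdd_iff_second_difference {F : Type} [Field F] [Finite F] (g : F → F) :
    IsPlanarOdd g ↔ ∀ x y z : F, g x - g y - g z + g (-x + y + z) = 0 → x = y ∨ x = z := by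
  constructor
  · intro hg x y z hxyz
    refine or_iff_not_imp_left.mpr fun hxy => ?_
    have hdiff : g (y + (x - y)) - g y = g ((-x + y + z) + (x - y)) - g (-x + y + z) := by
      rw [show y + (x - y) = x by ring, show -x + y + z + (x - y) = z by ring]
      linear_combination hxyz
    have hyw := (hg (x - y) (sub_ne_zero.mpr hxy)).injective hdiff
    linear_combination hyw
  · intro hg ε hε
    rw [← Finite.injective_iff_bijective]
    intro a b hab
    have hzero : g (a + ε) - g a - g (b + ε) + g (-(a + ε) + a + (b + ε)) = 0 := by
      rw [show -(a + ε) + a + (b + ε) = b by ring]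
      linear_combination hab
    rcases hg _ _ _ hzero with h | h
    · exact absurd (by linear_combination h : ε = 0) hε
    · linear_combination h

theorem sub_mul_sub_mul_aeval_eq_second_difference {K A : Type*} [CommRing K] [CommRing A]
    [Algebra K A] {f : K[X]} {G : MvPolynomial (Fin 3) K}
    (hG : (MvPolynomial.X 0 - MvPolynomial.X 1) * (MvPolynomial.X 0 - MvPolynomial.X 2) * G =
      Polynomial.aeval (MvPolynomial.X 0) f - Polynomial.aeval (MvPolynomial.X 1) f -
        Polynomial.aeval (MvPolynomial.X 2) f +
        Polynomial.aeval (-MvPolynomial.X 0 + MvPolynomial.X 1 + MvPolynomial.X 2) f)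
    (x y z : A) :
    (x - y) * (x - z) * MvPolynomial.aeval ![x, y, z] G =
      aeval x f - aeval y f - aeval z f + aeval (-x + y + z) f := by
  simpa [← Polynomial.aeval_algHom_apply] using congrArg (MvPolynomial.aeval ![x, y, z]) hG

theorem planar_iff_zeros_of_G_general
    (K : Type) [Field K]
    (f : K[X]) (G : MvPolynomial (Fin 3) K)
    (hG : (MvPolynomial.X 0 - MvPolynomial.X 1) * (MvPolynomial.X 0 - MvPolynomial.X 2) * G =
      Polynomial.aeval (MvPolynomial.X 0) f - Polynomial.aeval (MvPolynomial.X 1) f -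
        Polynomial.aeval (MvPolynomial.X 2) f +
        Polynomial.aeval (-MvPolynomial.X 0 + MvPolynomial.X 1 + MvPolynomial.X 2) f)
    (L : Type) [Field L] [Fintype L] [Algebra K L] :
    IsPlanarOdd (fun x : L => Polynomial.aeval x f) ↔
      ∀ x y z : L, MvPolynomial.aeval ![x, y, z] G = 0 → x = y ∨ x = z := by
  rw [isPlanarOdd_iff_second_difference]
  refine forall₃_congr fun x y z => ?_
  rw [← sub_mul_sub_mul_aeval_eq_second_difference hG, mul_eq_zero, mul_eq_zero,
    sub_eq_zero, sub_eq_zero]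
  tauto

theorem planar_iff_zeros_of_G
    (K : Type) [Field K] [Fintype K] (hodd : Odd (Fintype.card K))
    (f : K[X]) (G : MvPolynomial (Fin 3) K)
    (hG : (MvPolynomial.X 0 - MvPolynomial.X 1) * (MvPolynomial.X 0 - MvPolynomial.X 2) * G =
      Polynomial.aeval (MvPolynomial.X 0) f - Polynomial.aeval (MvPolynomial.X 1) f -
        Polynomial.aeval (MvPolynomial.X 2) f +
        Polynomial.aeval (-MvPolynomial.X 0 + MvPolynomial.X 1 + MvPolynomial.X 2) f)
    (r : ℕ) (hr : 0 < r)
    (L : Type) [Field L] [Fintype L] [Algebra K L]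
    (hL : Fintype.card L = Fintype.card K ^ r) :
    IsPlanarOdd (fun x : L => Polynomial.aeval x f) ↔
      ∀ x y z : L, MvPolynomial.aeval ![x, y, z] G = 0 → x = y ∨ x = z :=
  planar_iff_zeros_of_G_general K f G hG L
end

section
/- Let q be a power of 2, let f ∈ F_q[X], and let r be a positive integer. Then the function on F_{q^r} induced by f is planar if and only if every triple (x, y, z) ∈ F_{q^r}^3 with H(x, y, z) = 0 satisfies x = y or x = z (here H is evaluated in F_{q^r} via the inclusion of F_q into F_{q^r}). -/
open Polynomial

/-- A function on a field of characteristic two is planar if for every nonzero `ε`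
the map `x ↦ f (x + ε) + f x + ε * x` is a bijection. -/
def IsPlanarEven {F : Type} [Field F] (f : F → F) : Prop :=
  ∀ ε : F, ε ≠ 0 → Function.Bijective (fun x : F => f (x + ε) + f x + ε * x)

theorem planar_iff_zeros_of_H
    (m : ℕ) (hm : 0 < m)
    (K : Type) [Field K] [Fintype K] (hK : Fintype.card K = 2 ^ m)
    (f : K[X]) (H : MvPolynomial (Fin 3) K)
    (hH : (MvPolynomial.X 0 + MvPolynomial.X 1) * (MvPolynomial.X 0 + MvPolynomial.X 2) * H =
      Polynomial.aeval (MvPolynomial.X 0) f + Polynomial.aeval (MvPolynomial.X 1) f +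
        Polynomial.aeval (MvPolynomial.X 2) f +
        Polynomial.aeval (MvPolynomial.X 0 + MvPolynomial.X 1 + MvPolynomial.X 2) f +
        (MvPolynomial.X 0 + MvPolynomial.X 1) * (MvPolynomial.X 0 + MvPolynomial.X 2))
    (r : ℕ) (hr : 0 < r)
    (L : Type) [Field L] [Fintype L] [Algebra K L]
    (hL : Fintype.card L = Fintype.card K ^ r) :
    IsPlanarEven (fun x : L => Polynomial.aeval x f) ↔
      ∀ x y z : L, MvPolynomial.aeval ![x, y, z] H = 0 → x = y ∨ x = z := by
  -- L has characteristic 2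
  haveI hp2 : CharP L 2 := by
    have hprime : (ringChar L).Prime := CharP.char_is_prime L (ringChar L)
    haveI : CharP L (ringChar L) := ringChar.charP L
    obtain ⟨n, -, hcard⟩ := FiniteField.card L (ringChar L)
    have hdvd : ringChar L ∣ 2 ^ (m * r) := by
      have hc : (ringChar L) ^ (n : ℕ) = 2 ^ (m * r) := by
        rw [← hcard, hL, hK, ← pow_mul]
      exact hc ▸ dvd_pow_self _ n.ne_zero
    have h2 : ringChar L = 2 :=
      (Nat.prime_dvd_prime_iff_eq hprime Nat.prime_two).mp
        (hprime.dvd_of_dvd_pow hdvd)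
    exact h2 ▸ ringChar.charP L
  have hadd : ∀ a b : L, a + b = 0 ↔ a = b := fun a b => by
    rw [← CharTwo.sub_eq_add, sub_eq_zero]
  -- the evaluated key identity
  have key : ∀ x y z : L, (x + y) * (x + z) * (MvPolynomial.aeval ![x, y, z] H) =
      Polynomial.aeval x f + Polynomial.aeval y f + Polynomial.aeval z f +
        Polynomial.aeval (x + y + z) f + (x + y) * (x + z) := by
    intro x y z
    have h := congrArg (MvPolynomial.aeval (R := K) ![x, y, z]) hH
    simpa [map_add, map_mul, ← Polynomial.aeval_algHom_apply, Matrix.cons_val_zero,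
      Matrix.cons_val_one, Matrix.head_cons] using h
  constructor
  · intro hplanar x y z hz
    by_contra hc
    push_neg at hc
    obtain ⟨hxy, hxz⟩ := hc
    have hε : x + y ≠ 0 := fun h => hxy ((hadd _ _).1 h)
    have hinj := (hplanar (x + y) hε).injective
    refine hxz (hinj ?_)
    show Polynomial.aeval (x + (x + y)) f + Polynomial.aeval x f + (x + y) * x =
      Polynomial.aeval (z + (x + y)) f + Polynomial.aeval z f + (x + y) * z
    have e1 : x + (x + y) = y := by
      linear_combination CharTwo.add_self_eq_zero x
    have e2 : z + (x + y) = x + y + z := by ring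
    rw [e1, e2]
    have hkey := key x y z
    rw [hz, mul_zero] at hkey
    linear_combination -hkey - CharTwo.add_self_eq_zero
      (Polynomial.aeval z f + Polynomial.aeval (x + y + z) f + (x + y) * z)
  · intro hcond ε hε
    rw [← Finite.injective_iff_bijective]
    intro x z hxz
    by_contra hne
    simp only at hxz
    set y := x + ε with hy
    have e1 : x + ε = y := rfl
    have e2 : z + ε = x + y + z := by
      rw [hy]; linear_combination -CharTwo.add_self_eq_zero x
    have hε2 : ε = x + y := by
      rw [hy]; linear_combination -CharTwo.add_self_eq_zero x
    rw [e2, hε2] at hxz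
    have hP : (x + y) * (x + z) ≠ 0 := by
      refine mul_ne_zero (hε2 ▸ hε) (fun h => hne ((hadd _ _).1 h))
    have hHv : (x + y) * (x + z) * (MvPolynomial.aeval ![x, y, z] H) = 0 := by
      linear_combination key x y z + hxz + CharTwo.add_self_eq_zero
        (Polynomial.aeval z f + Polynomial.aeval (x + y + z) f + (x + y) * z)
    have hzero : MvPolynomial.aeval ![x, y, z] H = 0 := by
      rcases mul_eq_zero.mp hHv with h | h
      · exact absurd h hP
      · exact h
    rcases hcond x y z hzero with h | h
    · exact hε (by rw [hε2, ← h, (hadd x x).2 rfl])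
    · exact hne h
end

section
/- Let p be an odd prime and let d ≥ 3 be an odd integer with p not dividing d. Then Y + Z divides φ_d in F_p[X,Y,Z], but (Y + Z)^2 does not divide φ_d. -/
open MvPolynomial

/-!
Write `u = Y + Z`. Over `R[X, Y]`, the right-hand side `F` of the defining identity becomes
`X^d - Y^d - (u - Y)^d + (u - X)^d`, a polynomial in `u` with constant term `0` (as `d` is odd) and
linear coefficient `d (X^(d-1) - Y^(d-1)) ≠ 0` (as `d - 1` is even and positive). The factor
`(X - Y)(X - Z) = (X - Y)(X + Y - u)` has nonzero constant term in `u`, so `u ∣ φ` because `u` is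
prime, while `u² ∣ φ` would force `u² ∣ F`.
-/

namespace Polynomial

variable {A : Type*} [CommRing A]

/-- `X^d − Y^d − Z^d + (−X+Y+Z)^d` after the substitution `X ↦ a`, `Y ↦ b`, `Z ↦ u - b`. -/
noncomputable def shearedRhs (d : ℕ) (a b : A) : A[X] :=
  C (a ^ d) - C (b ^ d) - (X - C b) ^ d + (X - C a) ^ d

lemma coeff_zero_shearedRhs {d : ℕ} (hd : Odd d) (a b : A) : (shearedRhs d a b).coeff 0 = 0 := by
  simp [shearedRhs, coeff_zero_eq_eval_zero, hd.neg_pow]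

lemma coeff_one_shearedRhs {d : ℕ} (hd : Odd d) (a b : A) :
    (shearedRhs d a b).coeff 1 = d * (a ^ (d - 1) - b ^ (d - 1)) := by
  have hev : Even (d - 1) := Nat.Odd.sub_odd hd odd_one
  have coeff_one_pow (c : A) : ((X - C c) ^ d).coeff 1 = (-c) ^ (d - 1) * d := by
    rw [sub_eq_add_neg, ← C_neg, coeff_X_add_C_pow, Nat.choose_one_right]
  simp only [shearedRhs, coeff_add, coeff_sub, coeff_C, coeff_one_pow, hev.neg_pow]
  simp only [one_ne_zero, ↓reduceIte, sub_self, zero_sub]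
  ring

end Polynomial

section Shear

variable (R : Type*) [CommRing R]

/-- The change of variables `(X, Y, Z) ↦ (X, Y, u - Y)`, where `u` is the variable of the
polynomial ring over `R[X, Y]`; it sends `Y + Z` to `u`. -/
noncomputable def shearEquiv : MvPolynomial (Fin 3) R ≃ₐ[R] Polynomial (MvPolynomial (Fin 2) R) :=
  (AlgEquiv.ofAlgHom (aeval ![X 1, X 2, X 0 - X 2]) (aeval ![X 1 + X 2, X 0, X 1])
    (by ext i; fin_cases i <;> simp) (by ext i; fin_cases i <;> simp)).trans (finSuccEquiv R 2)

variable {R}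

lemma shearEquiv_X_zero : shearEquiv R (X 0) = Polynomial.C (X 0) := by
  show finSuccEquiv R 2 (aeval ![X 1, X 2, X 0 - X 2] (X 0)) = _
  rw [aeval_X, Matrix.cons_val_zero, show (1 : Fin 3) = Fin.succ 0 from rfl, finSuccEquiv_X_succ]

lemma shearEquiv_X_one : shearEquiv R (X 1) = Polynomial.C (X 1) := by
  show finSuccEquiv R 2 (aeval ![X 1, X 2, X 0 - X 2] (X 1)) = _
  rw [aeval_X, Matrix.cons_val_one, Matrix.cons_val_zero, show (2 : Fin 3) = Fin.succ 1 from rfl,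
    finSuccEquiv_X_succ]

lemma shearEquiv_X_two : shearEquiv R (X 2) = Polynomial.X - Polynomial.C (X 1) := by
  show finSuccEquiv R 2 (aeval ![X 1, X 2, X 0 - X 2] (X 2)) = _
  rw [aeval_X, Matrix.cons_val_two, Matrix.tail_cons, Matrix.head_cons, map_sub,
    finSuccEquiv_X_zero, show (2 : Fin 3) = Fin.succ 1 from rfl, finSuccEquiv_X_succ]

lemma shearEquiv_X_one_add_X_two : shearEquiv R (X 1 + X 2) = Polynomial.X := by
  rw [map_add, shearEquiv_X_one, shearEquiv_X_two, add_sub_cancel]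

lemma shearEquiv_mul_eq_shearedRhs {d : ℕ} {φ : MvPolynomial (Fin 3) R}
    (hφ : (X 0 - X 1) * (X 0 - X 2) * φ = X 0 ^ d - X 1 ^ d - X 2 ^ d + (-X 0 + X 1 + X 2) ^ d) :
    Polynomial.C (X 0 - X 1) * (Polynomial.C (X 0 + X 1) - Polynomial.X) * shearEquiv R φ =
      Polynomial.shearedRhs d (X 0) (X 1) := by
  have h := congrArg (shearEquiv R) hφ
  simp only [map_mul, map_sub, map_add, map_neg, map_pow, shearEquiv_X_zero, shearEquiv_X_one,
    shearEquiv_X_two] at h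
  rw [Polynomial.shearedRhs, map_sub, map_add, map_pow, map_pow]
  linear_combination h

theorem X_one_add_X_two_dvd_and_not_sq_dvd [IsDomain R] {d : ℕ} (hd : 1 < d) (hodd : Odd d)
    (hdR : (d : R) ≠ 0) {φ : MvPolynomial (Fin 3) R}
    (hφ : (X 0 - X 1) * (X 0 - X 2) * φ = X 0 ^ d - X 1 ^ d - X 2 ^ d + (-X 0 + X 1 + X 2) ^ d) :
    (X 1 + X 2) ∣ φ ∧ ¬ (X 1 + X 2) ^ 2 ∣ φ := by
  have key := shearEquiv_mul_eq_shearedRhs hφ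
  rw [← map_dvd_iff (shearEquiv R), ← map_dvd_iff (shearEquiv R), map_pow,
    shearEquiv_X_one_add_X_two]
  constructor
  · have hc : ¬ Polynomial.X ∣ Polynomial.C (X 0 - X 1 : MvPolynomial (Fin 2) R) *
        (Polynomial.C (X 0 + X 1) - Polynomial.X) := by
      rw [Polynomial.X_dvd_iff]
      intro h
      -- the constant term `(X - Y)(X + Y)` takes the value `1` at `(X, Y) = (1, 0)`
      apply_fun eval ![1, 0] at h
      simp at h
    refine (Polynomial.prime_X.dvd_or_dvd ?_).resolve_left hc
    rw [key, Polynomial.X_dvd_iff, Polynomial.coeff_zero_shearedRhs hodd]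
  · intro h
    have h2 := Polynomial.X_pow_dvd_iff.mp (key ▸ h.mul_left _) 1 one_lt_two
    rw [Polynomial.coeff_one_shearedRhs hodd] at h2
    apply_fun eval ![1, 0] at h2
    exact hdR (by simpa [Nat.sub_ne_zero_of_lt hd] using h2)

end Shear

theorem Y_add_Z_divides_phi_d_odd_char_general
    (p d : ℕ) (hp : p.Prime) (hd3 : 3 ≤ d) (hdodd : Odd d) (hpd : ¬ p ∣ d)
    (φ : MvPolynomial (Fin 3) (ZMod p))
    (hφ : (X 0 - X 1) * (X 0 - X 2) * φ =
      X 0 ^ d - X 1 ^ d - X 2 ^ d + (-X 0 + X 1 + X 2) ^ d) :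
    (X 1 + X 2) ∣ φ ∧ ¬ (X 1 + X 2) ^ 2 ∣ φ :=
  haveI := Fact.mk hp
  X_one_add_X_two_dvd_and_not_sq_dvd (by omega) hdodd (mt (ZMod.natCast_eq_zero_iff d p).mp hpd) hφ

theorem Y_add_Z_divides_phi_d_odd_char
    (p d : ℕ) (hp : p.Prime) (hpodd : Odd p) (hd3 : 3 ≤ d) (hdodd : Odd d) (hpd : ¬ p ∣ d)
    (φ : MvPolynomial (Fin 3) (ZMod p))
    (hφ : (X 0 - X 1) * (X 0 - X 2) * φ =
      X 0 ^ d - X 1 ^ d - X 2 ^ d + (-X 0 + X 1 + X 2) ^ d) :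
    (X 1 + X 2) ∣ φ ∧ ¬ (X 1 + X 2) ^ 2 ∣ φ :=
  Y_add_Z_divides_phi_d_odd_char_general p d hp hd3 hdodd hpd φ hφ
end

section
/- Let d ≥ 3 be an odd integer. Then Y + Z divides φ_d in F_2[X,Y,Z], but (Y + Z)^2 does not divide φ_d. -/
/-!
In characteristic two `Y + Z` divides both `Y ^ d + Z ^ d` and `X ^ d + (X + Y + Z) ^ d`, hence the
right-hand side; being prime and dividing neither `X + Y` nor `X + Z`, it divides `φ`.
On the line `(1, 0, t)` the form `Y + Z` becomes `t` and the right-hand side becomes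
`1 + t ^ d + (1 + t) ^ d`, whose coefficient of `t` is `d = 1`, so `t ^ 2` does not divide it.
-/

open MvPolynomial

namespace MvPolynomial

variable {σ R : Type*} [CommRing R] [IsDomain R]

theorem X_add_X_prime {i j : σ} (hij : i ≠ j) : Prime (X i + X j : MvPolynomial σ R) := by
  classical
  let shear : MvPolynomial σ R ≃ₐ[R] MvPolynomial σ R :=
    AlgEquiv.ofAlgHom (aeval (Function.update X i (X i + X j)))
      (aeval (Function.update X i (X i - X j)))
      (algHom_ext fun k => by
        by_cases hk : k = i
        · subst hk; simp [Function.update, hij.symm]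
        · simp [Function.update, hk])
      (algHom_ext fun k => by
        by_cases hk : k = i
        · subst hk; simp [Function.update, hij.symm]
        · simp [Function.update, hk])
  have hshear : shear (X i) = X i + X j := by simp [shear]
  rw [← hshear, MulEquiv.prime_iff]
  exact X_prime

end MvPolynomial

theorem add_dvd_pow_add_pow_add_pow_add_add_pow {R : Type*} [CommRing R] [CharP R 2]
    (x y z : R) (d : ℕ) : y + z ∣ x ^ d + y ^ d + z ^ d + (x + y + z) ^ d := by
  have hyz : y + z ∣ y ^ d + z ^ d := by
    simpa only [CharTwo.sub_eq_add] using sub_dvd_pow_sub_pow y z d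
  have hx : y + z ∣ (x + y + z) ^ d + x ^ d := by
    have := sub_dvd_pow_sub_pow (x + y + z) x d
    rwa [add_assoc, add_sub_cancel_left, CharTwo.sub_eq_add, ← add_assoc] at this
  have hsplit : x ^ d + y ^ d + z ^ d + (x + y + z) ^ d =
      (y ^ d + z ^ d) + ((x + y + z) ^ d + x ^ d) := by
    ring
  exact hsplit ▸ dvd_add hyz hx

namespace Polynomial

theorem not_X_sq_dvd_one_add_X_pow_add_one_add_X_pow {R : Type*} [Semiring R] {d : ℕ}
    (hd : 2 ≤ d) (hdR : (d : R) ≠ 0) : ¬ X ^ 2 ∣ (1 + X ^ d + (1 + X) ^ d : R[X]) := by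
  rw [X_pow_dvd_iff]
  intro h
  have hcoeff : (1 + X ^ d + (1 + X) ^ d : R[X]).coeff 1 = d := by
    simp [coeff_one_add_X_pow, coeff_X_pow, coeff_one, if_neg (show 1 ≠ d by omega)]
  exact hdR (hcoeff ▸ h 1 (by norm_num))

end Polynomial

theorem Y_add_Z_divides_phi_d_char_two
    (d : ℕ) (hd3 : 3 ≤ d) (hdodd : Odd d)
    (φ : MvPolynomial (Fin 3) (ZMod 2))
    (hφ : (X 0 + X 1) * (X 0 + X 2) * φ =
      X 0 ^ d + X 1 ^ d + X 2 ^ d + (X 0 + X 1 + X 2) ^ d) :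
    (X 1 + X 2) ∣ φ ∧ ¬ (X 1 + X 2) ^ 2 ∣ φ := by
  let restrict : MvPolynomial (Fin 3) (ZMod 2) →ₐ[ZMod 2] Polynomial (ZMod 2) :=
    aeval ![1, 0, Polynomial.X]
  have restrict_Y_add_Z : restrict (X 1 + X 2) = Polynomial.X := by simp [restrict]
  have not_dvd_of_restrict {q} (hq : (restrict q).coeff 0 ≠ 0) : ¬ X 1 + X 2 ∣ q := fun h => by
    have := map_dvd restrict h
    rw [restrict_Y_add_Z, Polynomial.X_dvd_iff] at this
    exact hq this
  have hprime : Prime (X 1 + X 2 : MvPolynomial (Fin 3) (ZMod 2)) := X_add_X_prime (by decide)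
  have hrhs :=
    add_dvd_pow_add_pow_add_pow_add_add_pow (X 0 : MvPolynomial (Fin 3) (ZMod 2)) (X 1) (X 2) d
  rw [← hφ] at hrhs
  refine ⟨?_, fun hsq => ?_⟩
  · rcases hprime.dvd_or_dvd hrhs with h | h
    · rcases hprime.dvd_or_dvd h with h | h <;>
        exact absurd h (not_dvd_of_restrict (by simp [restrict]))
    · exact h
  · have := map_dvd restrict (dvd_mul_of_dvd_right hsq ((X 0 + X 1) * (X 0 + X 2)))
    rw [hφ, map_pow, restrict_Y_add_Z] at this
    have hd : d ≠ 0 := by omega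
    simp only [map_add, map_pow, aeval_X, Matrix.cons_val_zero, Matrix.cons_val_one,
      Matrix.cons_val, one_pow, zero_pow hd, add_zero, restrict] at this
    exact Polynomial.not_X_sq_dvd_one_add_X_pow_add_one_add_X_pow (by omega)
      (ZMod.natCast_ne_zero_iff_odd.mpr hdodd) this
end

section
/- Let d = 2e where e ≥ 3 is an odd integer. Then, in F_2[X,Y,Z], the identity φ_d = φ_e^2 · (X+Y)(X+Z) holds; moreover X + Y divides φ_d but (X+Y)^2 does not divide φ_d. -/
/-!
Over a ring of characteristic 2, Frobenius gives `S(2e) = S(e)^2` for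
`S(j) = X^j + Y^j + Z^j + (X+Y+Z)^j` (`powerSumDefect R j`), hence `φ_{2e} = φ_e^2 (X+Y)(X+Z)`.
For the valuation at `X + Y`, differentiate `(X+Y)(X+Z) φ_e = S(e)` in `Y` and put `Y = X`:
since `X + Y` vanishes there, `φ_e(X,X,Z) (X+Z) = e X^(e-1) + e Z^(e-1) = X^(e-1) + Z^(e-1)`,
which is nonzero for odd `e ≥ 3`. So `X + Y ∤ φ_e`, and `φ_{2e}` is divisible by `X + Y`
exactly once.
-/

open MvPolynomial

variable (R : Type*) [CommRing R]

noncomputable def powerSumDefect (j : ℕ) : MvPolynomial (Fin 3) R :=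
  X 0 ^ j + X 1 ^ j + X 2 ^ j + (X 0 + X 1 + X 2) ^ j

variable {R}

theorem powerSumDefect_mul_char (p : ℕ) [Fact p.Prime] [CharP R p] (e : ℕ) :
    powerSumDefect R (p * e) = powerSumDefect R e ^ p := by
  simp only [powerSumDefect, add_pow_char, pow_mul']

theorem X_add_X_ne_zero {σ S : Type*} [CommSemiring S] [Nontrivial S] {i j : σ} (h : i ≠ j) :
    (X i + X j : MvPolynomial σ S) ≠ 0 := by
  classical
  intro hij
  simpa [Pi.single_apply, h] using congrArg (eval (Pi.single i 1)) hij

theorem eq_pow_mul_of_mul_eq_powerSumDefect [IsDomain R] (p : ℕ) [Fact p.Prime] [CharP R p]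
    {e : ℕ} {φd φe : MvPolynomial (Fin 3) R}
    (hφd : (X 0 + X 1) * (X 0 + X 2) * φd = powerSumDefect R (p * e))
    (hφe : (X 0 + X 1) * (X 0 + X 2) * φe = powerSumDefect R e) :
    φd = φe ^ p * ((X 0 + X 1) * (X 0 + X 2)) ^ (p - 1) := by
  refine mul_left_cancel₀ (mul_ne_zero (X_add_X_ne_zero (i := 0) (j := 1) (by decide))
    (X_add_X_ne_zero (i := 0) (j := 2) (by decide))) ?_
  rw [hφd, powerSumDefect_mul_char, ← hφe, mul_pow, mul_left_comm, ← pow_succ',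
    Nat.sub_add_cancel (Fact.out : p.Prime).one_lt.le, mul_comm]

-- `rename ![0, 0, 2]` is the substitution `X 1 ↦ X 0`, i.e. `Y = X`.
theorem rename_pderiv_one_X_add_X_mul [CharP R 2] (q : MvPolynomial (Fin 3) R) :
    rename ![0, 0, 2] (pderiv 1 ((X 0 + X 1) * q)) = rename ![0, 0, 2] q := by
  have h : rename ![0, 0, 2] (X 0 + X 1 : MvPolynomial (Fin 3) R) = 0 := by
    simp [CharTwo.add_self_eq_zero]
  simp [h]

theorem rename_pderiv_one_powerSumDefect [CharP R 2] {e : ℕ} (he : Odd e) :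
    rename ![0, 0, 2] (pderiv 1 (powerSumDefect R e)) = X 0 ^ (e - 1) + X 2 ^ (e - 1) := by
  have h1 : (e : MvPolynomial (Fin 3) R) = 1 :=
    natCast_eq_one_of_odd_of_two_eq_zero he CharTwo.two_eq_zero
  simp [powerSumDefect, h1, CharTwo.add_self_eq_zero]

theorem rename_mul_X_add_X_of_mul_eq_powerSumDefect [CharP R 2] {e : ℕ} (he : Odd e)
    {φ : MvPolynomial (Fin 3) R}
    (hφ : (X 0 + X 1) * (X 0 + X 2) * φ = powerSumDefect R e) :
    rename ![0, 0, 2] φ * (X 0 + X 2) = X 0 ^ (e - 1) + X 2 ^ (e - 1) := by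
  rw [← rename_pderiv_one_powerSumDefect he, ← hφ, mul_assoc, rename_pderiv_one_X_add_X_mul]
  simp [mul_comm]

theorem rename_ne_zero_of_mul_eq_powerSumDefect [CharP R 2] [Nontrivial R] {e : ℕ} (he3 : 3 ≤ e)
    (he : Odd e) {φ : MvPolynomial (Fin 3) R}
    (hφ : (X 0 + X 1) * (X 0 + X 2) * φ = powerSumDefect R e) :
    rename ![0, 0, 2] φ ≠ 0 := by
  intro h0
  have := congrArg (eval (Pi.single 0 1)) (rename_mul_X_add_X_of_mul_eq_powerSumDefect he hφ)
  simp [h0, zero_pow (show e - 1 ≠ 0 by omega)] at this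

theorem not_X_add_X_sq_dvd_sq_mul [IsDomain R] [CharP R 2] {φ : MvPolynomial (Fin 3) R}
    (hφ : rename ![0, 0, 2] φ ≠ 0) :
    ¬ (X 0 + X 1) ^ 2 ∣ φ ^ 2 * ((X 0 + X 1) * (X 0 + X 2)) := by
  rintro ⟨c, hc⟩
  have hc' : φ ^ 2 * (X 0 + X 2) = (X 0 + X 1) * c := by
    refine mul_left_cancel₀ (X_add_X_ne_zero (i := 0) (j := 1) (by decide)) ?_
    linear_combination hc
  have := congrArg (rename ![0, 0, 2]) hc'
  simp [CharTwo.add_self_eq_zero, hφ, X_add_X_ne_zero] at this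

theorem phi_two_e_char_two
    (d e : ℕ) (he3 : 3 ≤ e) (heodd : Odd e) (hde : d = 2 * e)
    (φd φe : MvPolynomial (Fin 3) (ZMod 2))
    (hφd : (X 0 + X 1) * (X 0 + X 2) * φd =
      X 0 ^ d + X 1 ^ d + X 2 ^ d + (X 0 + X 1 + X 2) ^ d)
    (hφe : (X 0 + X 1) * (X 0 + X 2) * φe =
      X 0 ^ e + X 1 ^ e + X 2 ^ e + (X 0 + X 1 + X 2) ^ e) :
    φd = φe ^ 2 * ((X 0 + X 1) * (X 0 + X 2)) ∧
      (X 0 + X 1) ∣ φd ∧ ¬ (X 0 + X 1) ^ 2 ∣ φd := by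
  subst hde
  have heq : φd = φe ^ 2 * ((X 0 + X 1) * (X 0 + X 2)) := by
    simpa using eq_pow_mul_of_mul_eq_powerSumDefect 2 hφd hφe
  refine ⟨heq, ⟨φe ^ 2 * (X 0 + X 2), by rw [heq]; ring⟩, ?_⟩
  rw [heq]
  exact not_X_add_X_sq_dvd_sq_mul (rename_ne_zero_of_mul_eq_powerSumDefect he3 heodd hφe)
end
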